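/- arXiv:2109.06142 — 2 statements merged into one kernel-verified Lean document; each statement's English description precedes it below -/
import Mathlib

section
/- If γ ∈ Sp(2g, ℝ) has finite order and fixes a point τ ∈ ℍ_g (i.e., γ·τ = τ), then γ is diagonalizable over ℂ, and the matrix C_γ τ + D_γ is diagonalizable with eigenvalues equal to the complex conjugates λ̄₁, …, λ̄_g of a choice of g of the eigenvalues of γ (the eigenvalues of γ being λ₁,…,λ_g, λ̄₁,…,λ̄_g). -/
open Matrix Complex

def SiegelUpperHalfSpace (g : ℕ) : Set (Matrix (Fin g) (Fin g) ℂ) :=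
  {τ | τ.IsSymm ∧ Matrix.PosDef (fun i j => (τ i j).im)}

/-- `J(β, τ) = Cτ + D`. -/
noncomputable def siegelCocycle {g : ℕ} (β : Matrix (Fin g ⊕ Fin g) (Fin g ⊕ Fin g) ℝ)
    (τ : Matrix (Fin g) (Fin g) ℂ) : Matrix (Fin g) (Fin g) ℂ :=
  (β.toBlocks₂₁).map Complex.ofReal * τ + (β.toBlocks₂₂).map Complex.ofReal

/-- The Möbius action `β·τ = (Aτ + B)(Cτ + D)⁻¹`. -/
noncomputable def siegelAction {g : ℕ} (β : Matrix (Fin g ⊕ Fin g) (Fin g ⊕ Fin g) ℝ)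
    (τ : Matrix (Fin g) (Fin g) ℂ) : Matrix (Fin g) (Fin g) ℂ :=
  ((β.toBlocks₁₁).map Complex.ofReal * τ + (β.toBlocks₁₂).map Complex.ofReal) *
    (siegelCocycle β τ)⁻¹

/-! The fixed-point equation `(Aτ + B)J⁻¹ = τ`, with `J = Cτ + D`, says that `γ` maps the block
column `(τ; 1)` to `(τ; 1) J` (a singular `J` is impossible: its junk inverse `0` would force
`τ = 0`). Hence `J ^ k = 1`, so `J Q = Q diag(d)` for an invertible `Q`, and since `γ` is real,
conjugation gives `γ (τ̄; 1) Q̄ = (τ̄; 1) Q̄ diag(d̄)`. The matrix `[[τ̄ Q̄, τ Q], [Q̄, Q]]` built from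
these eigenvectors has determinant `det (τ̄ - τ) · det Q̄ · det Q ≠ 0`, as `τ̄ - τ = -2i Im τ` with
`Im τ` positive definite; it diagonalizes `γ` with eigenvalues `d̄, d`, and `Λ = d̄` works. -/

open Polynomial in
lemma Module.End.iSup_eigenspace_eq_top_of_pow_eq_one {K V : Type*} [Field K] [IsAlgClosed K]
    [AddCommGroup V] [Module K V] [FiniteDimensional K V] {f : Module.End K V} {k : ℕ}
    (hk : (k : K) ≠ 0) (hf : f ^ k = 1) : ⨆ μ : K, f.eigenspace μ = ⊤ := by
  have hsq : Squarefree (X ^ k - 1 : K[X]) := (X_pow_sub_one_separable_iff.mpr hk).squarefree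
  exact (isSemisimple_of_squarefree_aeval_eq_zero hsq (by simp [hf])).iSup_eigenspace_eq_top

lemma Module.End.exists_basis_eigenvectors_of_iSup_eigenspace_eq_top {K V : Type*} [Field K]
    [AddCommGroup V] [Module K V] [FiniteDimensional K V] {f : Module.End K V}
    (hf : ⨆ μ : K, f.eigenspace μ = ⊤) :
    ∃ (b : Module.Basis (Fin (Module.finrank K V)) K V) (d : Fin (Module.finrank K V) → K),
      ∀ i, f (b i) = d i • b i := by
  classical
  have hint : DirectSum.IsInternal f.eigenspace :=
    DirectSum.isInternal_submodule_of_iSupIndep_of_iSup_eq_top f.eigenspaces_iSupIndep hf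
  let b := hint.collectedBasis fun μ => Module.finBasis K (f.eigenspace μ)
  let e := b.indexEquiv (Module.finBasis K V)
  refine ⟨b.reindex e, fun i => (e.symm i).1, fun i => ?_⟩
  rw [Module.Basis.reindex_apply]
  exact Module.End.mem_eigenspace_iff.mp (hint.collectedBasis_mem _ _)

lemma Matrix.mul_toMatrix_eq_toMatrix_mul_diagonal {R m : Type*} [CommSemiring R] [Fintype m]
    [DecidableEq m] {M : Matrix m m R} {b : Module.Basis m R (m → R)} {d : m → R}
    (h : ∀ i, M.mulVec (b i) = d i • b i) :
    M * (Pi.basisFun R m).toMatrix b = (Pi.basisFun R m).toMatrix b * diagonal d := by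
  ext i j
  have := congrFun (h j) i
  simp only [mulVec, dotProduct, Pi.smul_apply, smul_eq_mul] at this
  rw [mul_diagonal]
  simp [Module.Basis.toMatrix_apply, mul_apply, this, mul_comm]

theorem Matrix.exists_isUnit_det_mul_eq_mul_diagonal_of_pow_eq_one {K m : Type*} [Field K]
    [IsAlgClosed K] [Fintype m] [DecidableEq m] {M : Matrix m m K} {k : ℕ}
    (hk : (k : K) ≠ 0) (hM : M ^ k = 1) :
    ∃ (d : m → K) (P : Matrix m m K), IsUnit P.det ∧ M * P = P * diagonal d := by
  have hf : M.toLin' ^ k = 1 := by rw [← toLin'_pow, hM, toLin'_one]; rfl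
  obtain ⟨b, d, hb⟩ := Module.End.exists_basis_eigenvectors_of_iSup_eigenspace_eq_top
    (Module.End.iSup_eigenspace_eq_top_of_pow_eq_one hk hf)
  let e := b.indexEquiv (Pi.basisFun K m)
  refine ⟨d ∘ e.symm, _, (Pi.basisFun K m).isUnit_det (b.reindex e),
    mul_toMatrix_eq_toMatrix_mul_diagonal fun i => ?_⟩
  simpa using hb (e.symm i)

lemma Matrix.eq_mul_mul_nonsing_inv_of_mul_eq {R m : Type*} [CommRing R] [Fintype m]
    [DecidableEq m] {A P D : Matrix m m R} (hP : IsUnit P.det) (h : A * P = P * D) :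
    A = P * D * P⁻¹ := by
  rw [← h, mul_nonsing_inv_cancel_right _ _ hP]

lemma Matrix.fromCols_mul_diagonal_sumElim {R m n₁ n₂ : Type*} [Semiring R] [Fintype n₁]
    [Fintype n₂] [DecidableEq n₁] [DecidableEq n₂] (X : Matrix m n₁ R) (Y : Matrix m n₂ R)
    (d : n₁ → R) (e : n₂ → R) :
    fromCols X Y * diagonal (Sum.elim d e) = fromCols (X * diagonal d) (Y * diagonal e) := by
  rw [← fromBlocks_diagonal, fromCols_mul_fromBlocks]
  simp

lemma Matrix.pow_eq_one_of_mul_fromRows_one_eq {R m n : Type*} [Semiring R] [Fintype m]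
    [Fintype n] [DecidableEq m] [DecidableEq n] {A : Matrix (m ⊕ n) (m ⊕ n) R}
    {X : Matrix m n R} {M : Matrix n n R} (h : A * fromRows X (1 : Matrix n n R) = fromRows X 1 * M)
    {k : ℕ} (hA : A ^ k = 1) : M ^ k = 1 := by
  have hpow : ∀ j : ℕ, A ^ j * fromRows X (1 : Matrix n n R) = fromRows X 1 * M ^ j := by
    intro j
    induction j with
    | zero => simp
    | succ j ih =>
      rw [pow_succ', Matrix.mul_assoc, ih, ← Matrix.mul_assoc, h, Matrix.mul_assoc, ← pow_succ']
  have := hpow k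
  rw [hA, Matrix.one_mul, fromRows_mul, fromRows_ext_iff] at this
  simpa using this.2.symm

lemma Matrix.map_ofReal_mul_map_conj_eq_of_mul_eq {m n : Type*} [Fintype m] [Fintype n]
    {A : Matrix m m ℝ} {X : Matrix m n ℂ} {Y : Matrix n n ℂ}
    (h : A.map ofReal * X = X * Y) :
    A.map ofReal * X.map (starRingEnd ℂ) = X.map (starRingEnd ℂ) * Y.map (starRingEnd ℂ) := by
  have hA : (A.map ofReal).map (starRingEnd ℂ) = A.map ofReal := by
    ext i j; simp
  simpa [Matrix.map_mul, hA] using congrArg (·.map (starRingEnd ℂ)) h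

lemma Matrix.isUnit_det_map_conj_sub {n : Type*} [Fintype n] [DecidableEq n]
    {τ : Matrix n n ℂ} (hτ : (τ.map im).PosDef) : IsUnit (τ.map (starRingEnd ℂ) - τ).det := by
  have hsub : τ.map (starRingEnd ℂ) - τ = (-2 * I) • (τ.map im).map ofReal := by
    ext i j; simp [Complex.ext_iff]; ring
  have hdet : ((τ.map im).map ofReal).det = ((τ.map im).det : ℂ) :=
    (RingHom.map_det ofRealHom _).symm
  rw [hsub, det_smul, hdet]
  exact isUnit_iff_ne_zero.mpr (mul_ne_zero (pow_ne_zero _ (by simp))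
    (ofReal_ne_zero.mpr hτ.det_pos.ne'))

lemma Matrix.isUnit_det_fromCols_map_conj {n : Type*} [Fintype n] [DecidableEq n]
    {τ Q : Matrix n n ℂ} (hτ : (τ.map im).PosDef) (hQ : IsUnit Q.det) :
    IsUnit (fromCols ((fromRows τ (1 : Matrix n n ℂ) * Q).map (starRingEnd ℂ))
      (fromRows τ 1 * Q)).det := by
  have hfactor : fromCols ((fromRows τ (1 : Matrix n n ℂ) * Q).map (starRingEnd ℂ))
      (fromRows τ 1 * Q) =
      fromBlocks (τ.map (starRingEnd ℂ)) τ 1 1 * fromBlocks (Q.map (starRingEnd ℂ)) 0 0 Q := by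
    rw [fromBlocks_multiply]
    ext (i | i) (j | j) <;> simp [mul_apply]
  have hQc : IsUnit (Q.map (starRingEnd ℂ)).det := by
    simpa [RingHom.map_det] using hQ.map (starRingEnd ℂ)
  rw [hfactor, det_mul, det_fromBlocks_one₂₂, det_fromBlocks_zero₁₂, Matrix.mul_one]
  exact (isUnit_det_map_conj_sub hτ).mul (hQc.mul hQ)

lemma isUnit_det_siegelCocycle_of_siegelAction_eq {g : ℕ}
    {γ : Matrix (Fin g ⊕ Fin g) (Fin g ⊕ Fin g) ℝ} {τ : Matrix (Fin g) (Fin g) ℂ}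
    (hτ : (τ.map im).PosDef) (hfix : siegelAction γ τ = τ) :
    IsUnit (siegelCocycle γ τ).det := by
  by_contra hJ
  rcases isEmpty_or_nonempty (Fin g) with hg | ⟨⟨i⟩⟩
  · exact hJ (by simp)
  have hτ0 : τ = 0 := by
    rw [← hfix, siegelAction, nonsing_inv_apply_not_isUnit _ hJ, Matrix.mul_zero]
  simpa [hτ0] using hτ.diag_pos (i := i)

lemma map_ofReal_mul_fromRows_eq_fromRows_mul_siegelCocycle {g : ℕ}
    {γ : Matrix (Fin g ⊕ Fin g) (Fin g ⊕ Fin g) ℝ} {τ : Matrix (Fin g) (Fin g) ℂ}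
    (hJ : IsUnit (siegelCocycle γ τ).det) (hfix : siegelAction γ τ = τ) :
    γ.map ofReal * fromRows τ (1 : Matrix (Fin g) (Fin g) ℂ) =
      fromRows τ 1 * siegelCocycle γ τ := by
  have htop : γ.toBlocks₁₁.map ofReal * τ + γ.toBlocks₁₂.map ofReal = τ * siegelCocycle γ τ :=
    (nonsing_inv_mul_cancel_right _ _ hJ).symm.trans (congrArg (· * siegelCocycle γ τ) hfix)
  rw [← fromBlocks_toBlocks γ, fromBlocks_map, fromBlocks_mul_fromRows, fromRows_mul,
    Matrix.mul_one, Matrix.mul_one, Matrix.one_mul, htop]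
  rfl

theorem cocycle_diagonalizable_of_fixed_general {g : ℕ}
    (γ : Matrix (Fin g ⊕ Fin g) (Fin g ⊕ Fin g) ℝ)
    (k : ℕ) (hk : 0 < k) (hfin : γ ^ k = 1)
    (τ : Matrix (Fin g) (Fin g) ℂ) (hτ : τ ∈ SiegelUpperHalfSpace g)
    (hfix : siegelAction γ τ = τ) :
    ∃ Λ : Fin g → ℂ,
      (∃ P : Matrix (Fin g ⊕ Fin g) (Fin g ⊕ Fin g) ℂ, IsUnit P.det ∧
        γ.map Complex.ofReal =
          P * Matrix.diagonal (Sum.elim Λ (fun i => (starRingEnd ℂ) (Λ i))) * P⁻¹) ∧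
      (∃ Q : Matrix (Fin g) (Fin g) ℂ, IsUnit Q.det ∧
        siegelCocycle γ τ =
          Q * Matrix.diagonal (fun i => (starRingEnd ℂ) (Λ i)) * Q⁻¹) := by
  have hJ := isUnit_det_siegelCocycle_of_siegelAction_eq hτ.2 hfix
  have hv := map_ofReal_mul_fromRows_eq_fromRows_mul_siegelCocycle hJ hfix
  have hγk : γ.map ofReal ^ k = 1 := by
    change ofRealHom.mapMatrix γ ^ k = 1
    rw [← map_pow, hfin, map_one]
  obtain ⟨d, Q, hQ, hJQ⟩ := exists_isUnit_det_mul_eq_mul_diagonal_of_pow_eq_one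
    (by exact_mod_cast hk.ne') (pow_eq_one_of_mul_fromRows_one_eq hv hγk)
  have hW : γ.map ofReal * (fromRows τ (1 : Matrix (Fin g) (Fin g) ℂ) * Q) =
      fromRows τ 1 * Q * diagonal d := by
    rw [← Matrix.mul_assoc, hv, Matrix.mul_assoc, hJQ, Matrix.mul_assoc]
  have hWc := map_ofReal_mul_map_conj_eq_of_mul_eq hW
  have hP := isUnit_det_fromCols_map_conj hτ.2 hQ
  refine ⟨fun i => starRingEnd ℂ (d i), ⟨_, hP, eq_mul_mul_nonsing_inv_of_mul_eq hP ?_⟩,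
    Q, hQ, by simpa using eq_mul_mul_nonsing_inv_of_mul_eq hQ hJQ⟩
  rw [mul_fromCols, hWc, hW, diagonal_map (map_zero _), fromCols_mul_diagonal_sumElim]
  simp only [Complex.conj_conj]

/-- If `γ ∈ Sp(2g,ℝ)` has finite order and fixes `τ ∈ ℍ_g`, then `γ`
is diagonalizable over `ℂ` with eigenvalues `λ₁,…,λ_g, λ̄₁,…,λ̄_g`, and
`C_γ τ + D_γ` is diagonalizable with eigenvalues `λ̄₁, …, λ̄_g`. -/
theorem cocycle_diagonalizable_of_fixed {g : ℕ}
    (γ : Matrix (Fin g ⊕ Fin g) (Fin g ⊕ Fin g) ℝ)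
    (hγ : γ ∈ Matrix.symplecticGroup (Fin g) ℝ)
    (k : ℕ) (hk : 0 < k) (hfin : γ ^ k = 1)
    (τ : Matrix (Fin g) (Fin g) ℂ) (hτ : τ ∈ SiegelUpperHalfSpace g)
    (hfix : siegelAction γ τ = τ) :
    ∃ Λ : Fin g → ℂ,
      (∃ P : Matrix (Fin g ⊕ Fin g) (Fin g ⊕ Fin g) ℂ, IsUnit P.det ∧
        γ.map Complex.ofReal =
          P * Matrix.diagonal (Sum.elim Λ (fun i => (starRingEnd ℂ) (Λ i))) * P⁻¹) ∧
      (∃ Q : Matrix (Fin g) (Fin g) ℂ, IsUnit Q.det ∧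
        siegelCocycle γ τ =
          Q * Matrix.diagonal (fun i => (starRingEnd ℂ) (Λ i)) * Q⁻¹) :=
  cocycle_diagonalizable_of_fixed_general γ k hk hfin τ hτ hfix
end

section
/- If γ ∈ Sp(2g, ℤ) is nontrivial and fixes τ ∈ ℍ_g, then C_γ τ + D_γ has an eigenvalue different from 1. -/
/-!
Suppose every eigenvalue of `J = Cτ + D` is `1`. Then `J` is invertible and the fixed-point equation
reads `γ (τ; 1) = (τ; 1) J`; as `γ` is real, also `γ (τ̄; 1) = (τ̄; 1) J̄`. Pairing the two with
the symplectic form gives `Jᴴ (Im τ) J = Im τ`, so conjugating `J` by a square root of the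
positive definite `Im τ` gives a unitary matrix with spectrum `{1}`, which is the identity.
Hence `J = 1` and `γ` fixes both columns of `(τ τ̄; 1 1)`. This matrix is invertible because
`τ - τ̄ = 2i Im τ`, so `γ = 1`.
-/

open Matrix Complex

open scoped ComplexConjugate ComplexOrder

namespace Matrix

variable {n R : Type*} [Fintype n] [DecidableEq n] [CommRing R]

theorem transpose_fromRows_one_mul_J_mul_fromRows_one (τ₁ τ₂ : Matrix n n R) :
    (fromRows τ₂ (1 : Matrix n n R))ᵀ * J n R * fromRows τ₁ (1 : Matrix n n R) = τ₁ - τ₂ᵀ := by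
  simp [J, transpose_fromRows, Matrix.mul_assoc, fromBlocks_mul_fromRows, fromCols_mul_fromRows,
    sub_eq_neg_add]

theorem transpose_mul_J_mul_of_mem_symplecticGroup {m : Type*} [Fintype m]
    {M : Matrix (n ⊕ n) (n ⊕ n) R} (hM : M ∈ symplecticGroup n R) (X Y : Matrix (n ⊕ n) m R) :
    (M * X)ᵀ * J n R * (M * Y) = Xᵀ * J n R * Y := by
  calc (M * X)ᵀ * J n R * (M * Y) = Xᵀ * (Mᵀ * J n R * M) * Y := by
        simp only [transpose_mul, Matrix.mul_assoc]
    _ = Xᵀ * J n R * Y := by rw [SymplecticGroup.mem_iff'.mp hM]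

theorem eq_one_of_mul_fromRows_one_eq {M : Matrix (n ⊕ n) (n ⊕ n) R} {τ₁ τ₂ : Matrix n n R}
    (hτ : IsUnit (τ₁ - τ₂).det) (h₁ : M * fromRows τ₁ (1 : Matrix n n R) = fromRows τ₁ 1)
    (h₂ : M * fromRows τ₂ (1 : Matrix n n R) = fromRows τ₂ 1) : M = 1 := by
  have hQ : IsUnit (fromBlocks τ₁ τ₂ (1 : Matrix n n R) 1).det := by
    simpa [det_fromBlocks_one₂₂] using hτ
  have hMQ : M * fromBlocks τ₁ τ₂ 1 1 = fromBlocks τ₁ τ₂ 1 1 := by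
    rw [← fromCols_fromRows_eq_fromBlocks, mul_fromCols, h₁, h₂]
  rw [← mul_nonsing_inv_cancel_right _ M hQ, hMQ, mul_nonsing_inv _ hQ]

open scoped MatrixOrder in
theorem PosDef.map_ofReal {Y : Matrix n n ℝ} (hY : Y.PosDef) : (Y.map ofReal).PosDef := by
  set S := CFC.sqrt Y
  have hS : IsUnit S := (CFC.isUnit_sqrt_iff Y hY.posSemidef.nonneg).mpr hY.isUnit
  have hSS : star S * S = Y := by
    rw [(CFC.sqrt_nonneg Y).isSelfAdjoint.star_eq]
    exact CFC.sqrt_mul_sqrt_self Y hY.posSemidef.nonneg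
  have hmap : Y.map ofReal = star (S.map ofReal) * S.map ofReal := by
    rw [← hSS, star_eq_conjTranspose, star_eq_conjTranspose,
      ← conjTranspose_map _ fun _ ↦ (conj_ofReal _).symm]
    exact Matrix.map_mul (f := ofRealHom)
  have hSc : IsUnit (S.map ofReal) := hS.map ofRealHom.mapMatrix
  rw [← isStrictlyPositive_iff_posDef, hmap]
  exact ⟨star_mul_self_nonneg _, hSc.star.mul hSc⟩

end Matrix

theorem eq_one_of_star_mul_mul_eq_of_spectrum_subset_one {A : Type*} [CStarAlgebra A]
    [PartialOrder A] [StarOrderedRing A] {x y : A} (hy : IsStrictlyPositive y)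
    (hxy : star x * y * x = y) (hx : spectrum ℂ x ⊆ {1}) : x = 1 := by
  obtain ⟨s, hs, rfl⟩ := CStarAlgebra.isStrictlyPositive_iff_eq_star_mul_self.mp hy
  have hxu : IsUnit x := by
    rw [← spectrum.zero_notMem_iff ℂ]
    intro h0
    simpa using hx h0
  lift s to Aˣ using hs
  lift x to Aˣ using hxu
  -- `u` is unitary and has the spectrum of `x`; a normal element with spectrum `{1}` is `1`.
  set u : Aˣ := s * x * s⁻¹
  have hu : star (u : A) * u = 1 := by
    calc star (u : A) * u
        = star ((s⁻¹ : Aˣ) : A) * (star (x : A) * (star ↑s * ↑s) * x) * ↑(s⁻¹ : Aˣ) := by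
          simp only [u, Units.val_mul, star_mul, mul_assoc]
      _ = star ((s : A) * ↑(s⁻¹ : Aˣ)) * (s * ↑(s⁻¹ : Aˣ)) := by
          rw [hxy, star_mul]; simp only [mul_assoc]
      _ = 1 := by simp
  have hu' : (u : A) ∈ unitary A := by
    rw [Unitary.mem_iff, and_iff_right hu, Units.mul_eq_one_iff_eq_inv.mp hu]
    exact u.mul_inv
  have := isStarNormal_of_mem_unitary hu'
  have hu1 : u = 1 := Units.val_eq_one.mp <|
    CFC.eq_one_of_spectrum_subset_one (R := ℂ) (u : A) (by simpa [u, spectrum.units_conjugate])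
  rw [Units.val_eq_one]
  simpa [u, mul_inv_eq_one] using hu1

theorem sub_map_conj_eq_smul_map_im {n : Type*} (τ : Matrix n n ℂ) :
    τ - τ.map conj = (2 * I) • τ.map fun z ↦ (z.im : ℂ) := by
  ext i k
  simp only [Matrix.sub_apply, map_apply, Matrix.smul_apply, smul_eq_mul, sub_conj]
  push_cast
  ring

section Siegel

theorem map_ofReal_mul_fromRows_one {g : ℕ} (β : Matrix (Fin g ⊕ Fin g) (Fin g ⊕ Fin g) ℝ)
    (τ : Matrix (Fin g) (Fin g) ℂ) :
    β.map ofReal * fromRows τ (1 : Matrix (Fin g) (Fin g) ℂ) =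
      fromRows ((β.toBlocks₁₁).map ofReal * τ + (β.toBlocks₁₂).map ofReal) (siegelCocycle β τ) := by
  rw [← fromBlocks_toBlocks (β.map ofReal), fromBlocks_mul_fromRows]
  simp only [Matrix.mul_one]
  rfl

variable {g : ℕ} {β : Matrix (Fin g ⊕ Fin g) (Fin g ⊕ Fin g) ℝ} {τ : Matrix (Fin g) (Fin g) ℂ}

theorem map_ofReal_mul_fromRows_one_of_siegelAction_eq (hJ : IsUnit (siegelCocycle β τ).det)
    (hfix : siegelAction β τ = τ) :
    β.map ofReal * fromRows τ (1 : Matrix (Fin g) (Fin g) ℂ) =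
      fromRows τ 1 * siegelCocycle β τ := by
  have hnum : (β.toBlocks₁₁).map ofReal * τ + (β.toBlocks₁₂).map ofReal =
      siegelAction β τ * siegelCocycle β τ :=
    (nonsing_inv_mul_cancel_right _ _ hJ).symm
  rw [map_ofReal_mul_fromRows_one, fromRows_mul, Matrix.one_mul, hnum, hfix]

theorem map_ofReal_mul_fromRows_one_map_conj {X : Matrix (Fin g) (Fin g) ℂ}
    (h : β.map ofReal * fromRows τ (1 : Matrix (Fin g) (Fin g) ℂ) = fromRows τ 1 * X) :
    β.map ofReal * fromRows (τ.map conj) (1 : Matrix (Fin g) (Fin g) ℂ) =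
      fromRows (τ.map conj) 1 * X.map conj := by
  have hβ : (β.map ofReal).map conj = β.map ofReal := by
    rw [Matrix.map_map]; exact congrArg _ (funext conj_ofReal)
  simpa only [Matrix.map_mul (f := starRingEnd ℂ), fromRows_map,
    Matrix.map_one _ (map_zero _) (map_one _), hβ] using congrArg (Matrix.map · conj) h

theorem conjTranspose_siegelCocycle_mul_im_mul_of_siegelAction_eq
    (hβ : β ∈ symplecticGroup (Fin g) ℝ) (hτ : τ.IsSymm) (hJ : IsUnit (siegelCocycle β τ).det)
    (hfix : siegelAction β τ = τ) :
    (siegelCocycle β τ)ᴴ * (τ.map fun z ↦ (z.im : ℂ)) * siegelCocycle β τ =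
      τ.map fun z ↦ (z.im : ℂ) := by
  set j := siegelCocycle β τ
  set W := fromRows τ (1 : Matrix (Fin g) (Fin g) ℂ)
  set W' := fromRows (τ.map conj) (1 : Matrix (Fin g) (Fin g) ℂ)
  have h₁ : β.map ofReal * W = W * j := map_ofReal_mul_fromRows_one_of_siegelAction_eq hJ hfix
  have h₂ : β.map ofReal * W' = W' * j.map conj := map_ofReal_mul_fromRows_one_map_conj h₁
  have hτc : (τ.map conj)ᵀ = τ.map conj := by rw [← transpose_map, hτ.eq]
  have hW : W'ᵀ * J (Fin g) ℂ * W = τ - τ.map conj := by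
    rw [transpose_fromRows_one_mul_J_mul_fromRows_one, hτc]
  have hsub : jᴴ * (τ - τ.map conj) * j = τ - τ.map conj := by
    calc jᴴ * (τ - τ.map conj) * j = (W' * j.map conj)ᵀ * J (Fin g) ℂ * (W * j) := by
          rw [← hW, show jᴴ = (j.map conj)ᵀ from rfl]; simp only [transpose_mul, Matrix.mul_assoc]
      _ = (β.map ofReal * W')ᵀ * J (Fin g) ℂ * (β.map ofReal * W) := by rw [h₁, h₂]
      _ = W'ᵀ * J (Fin g) ℂ * W :=
          transpose_mul_J_mul_of_mem_symplecticGroup (SymplecticGroup.map_mem hβ ofRealHom) _ _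
      _ = τ - τ.map conj := hW
  rw [sub_map_conj_eq_smul_map_im, Matrix.mul_smul, Matrix.smul_mul] at hsub
  exact smul_right_injective _ (by simp) hsub

end Siegel

/-- If `γ ∈ Sp(2g, ℤ)` is nontrivial and fixes `τ ∈ ℍ_g`, then
`C_γ τ + D_γ` has an eigenvalue different from `1`. -/
theorem cocycle_has_nonone_eigenvalue {g : ℕ}
    (γ : Matrix (Fin g ⊕ Fin g) (Fin g ⊕ Fin g) ℤ)
    (hγ : γ ∈ Matrix.symplecticGroup (Fin g) ℤ)
    (hne : γ ≠ 1)
    (τ : Matrix (Fin g) (Fin g) ℂ) (hτ : τ ∈ SiegelUpperHalfSpace g)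
    (hfix : siegelAction (γ.map (Int.cast : ℤ → ℝ)) τ = τ) :
    ∃ μ ∈ spectrum ℂ (siegelCocycle (γ.map (Int.cast : ℤ → ℝ)) τ), μ ≠ 1 := by
  by_contra! hspec
  set β := γ.map (Int.cast : ℤ → ℝ)
  have hβ : β ∈ symplecticGroup (Fin g) ℝ := SymplecticGroup.map_mem hγ (Int.castRingHom ℝ)
  have hj : IsUnit (siegelCocycle β τ).det := by
    rw [← isUnit_iff_isUnit_det, ← spectrum.zero_notMem_iff ℂ]
    exact fun h ↦ zero_ne_one (hspec 0 h)
  have hY : (τ.map fun z ↦ (z.im : ℂ)).PosDef := hτ.2.map_ofReal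
  have hj1 : siegelCocycle β τ = 1 := by
    open scoped Matrix.Norms.L2Operator MatrixOrder in
    exact eq_one_of_star_mul_mul_eq_of_spectrum_subset_one hY.isStrictlyPositive
      (conjTranspose_siegelCocycle_mul_im_mul_of_siegelAction_eq hβ hτ.1 hj hfix) hspec
  have h₁ := map_ofReal_mul_fromRows_one_of_siegelAction_eq hj hfix
  have h₂ := map_ofReal_mul_fromRows_one_map_conj h₁
  rw [hj1, Matrix.mul_one] at h₁
  rw [hj1, Matrix.map_one _ (map_zero _) (map_one _), Matrix.mul_one] at h₂
  have hτc : IsUnit (τ - τ.map conj).det := by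
    rw [sub_map_conj_eq_smul_map_im, det_smul, isUnit_iff_ne_zero]
    exact mul_ne_zero (pow_ne_zero _ (by simp)) hY.det_pos.ne'
  have hβ1 := eq_one_of_mul_fromRows_one_eq hτc h₁ h₂
  refine hne (Matrix.map_injective (f := fun k : ℤ ↦ ((k : ℝ) : ℂ)) (by intro a b; simp) ?_)
  simpa [β, Matrix.map_map, Function.comp_def] using hβ1
end
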